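/- Explicit construction: in a projective plane of order q ≥ 3, let P, Q, R be three points in general position; let P_S consist of all points of the lines PQ and PR except P, Q, R, and let L_S consist of all lines through P or through R except PQ, PR, RQ. Then P_S ∪ L_S is a resolving set of size 4q − 4 for the incidence graph. -/

import Mathlib

/-!
In the incidence graph of a projective plane two distinct vertices of the same kind are at
distance 2, and a point and a line are at distance 1 or 3 according to incidence. So a nonempty
set of points `A` together with a set of lines `B` is resolving as soon as any two points outside
`A` are separated by a line of `B` and any two lines outside `B` by a point of `A`.

For the triangle `PQR` the point case is a case analysis on the position of the two points
relative to the sides; `q ≥ 3` is used to find a line through `P` (or `R`) that is not a side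
and misses a given point. The line case is the point case for the dual triangle, whose point and
line sets are those of `PQR` exchanged; the same duality gives `|L_S| = |P_S| = 2q - 2`.
-/

open Configuration

variable (P L : Type*) [Membership P L]

/-- The incidence graph of an incidence structure: vertices are points and lines,
with a point adjacent to a line iff it lies on it. -/
def incGraph : SimpleGraph (P ⊕ L) where
  Adj x y := match x, y with
    | .inl p, .inr l => p ∈ l
    | .inr l, .inl p => p ∈ l
    | _, _ => False
  symm := ⟨by rintro (p | l) (p' | l') h <;> simp_all⟩
  loopless := ⟨by rintro (p | l) h <;> simp_all⟩

/-- A set of vertices is resolving if the ordered distance lists to its elements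
distinguish all vertices. -/
def IsResolvingSet (S : Set (P ⊕ L)) : Prop :=
  ∀ x y : P ⊕ L, (∀ s ∈ S, (incGraph P L).dist x s = (incGraph P L).dist y s) → x = y

/-- A vertex `x` is resolved by `S` if no other vertex has the same distance list. -/
def ResolvedBy (S : Set (P ⊕ L)) (x : P ⊕ L) : Prop :=
  ∀ y : P ⊕ L, (∀ s ∈ S, (incGraph P L).dist x s = (incGraph P L).dist y s) → y = x

/-- The metric dimension: the least size of a resolving set. -/
noncomputable def metricDim : ℕ :=
  sInf {n | ∃ S : Finset (P ⊕ L), S.card = n ∧ IsResolvingSet P L ↑S}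

open Configuration.HasLines Configuration.HasPoints

section Nondegenerate

variable {P L} [Nondegenerate P L]

lemma line_eq_of_two_mem {p q : P} {l m : L} (hpq : p ≠ q) (hpl : p ∈ l) (hql : q ∈ l)
    (hpm : p ∈ m) (hqm : q ∈ m) : l = m :=
  (Nondegenerate.eq_or_eq hpl hql hpm hqm).resolve_left hpq

lemma point_eq_of_two_mem {p q : P} {l m : L} (hlm : l ≠ m) (hpl : p ∈ l) (hpm : p ∈ m)
    (hql : q ∈ l) (hqm : q ∈ m) : p = q :=
  (Nondegenerate.eq_or_eq hpl hql hpm hqm).resolve_right hlm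

end Nondegenerate

section FiniteProjectivePlane

variable {P L} [ProjectivePlane P L] [Finite P] [Finite L]

lemma ncard_setOf_mem_line (l : L) : {p : P | p ∈ l}.ncard = ProjectivePlane.order P L + 1 :=
  ProjectivePlane.pointCount_eq P l

lemma ncard_setOf_line_mem (p : P) : {l : L | p ∈ l}.ncard = ProjectivePlane.order P L + 1 :=
  ProjectivePlane.lineCount_eq L p

lemma ncard_setOf_mem_line_diff_pair {x y : P} {l : L} (hxy : x ≠ y) (hx : x ∈ l)
    (hy : y ∈ l) :
    ({p : P | p ∈ l} \ {x, y}).ncard = ProjectivePlane.order P L - 1 := by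
  rw [Set.ncard_sdiff (by rintro p (rfl | rfl) <;> assumption), ncard_setOf_mem_line,
    Set.ncard_pair hxy]
  omega

lemma exists_line_mem_ne_ne_notMem (hq : 3 ≤ ProjectivePlane.order P L) {x y : P} (hxy : x ≠ y)
    (l₁ l₂ : L) :
    ∃ l : L, x ∈ l ∧ l ≠ l₁ ∧ l ≠ l₂ ∧ y ∉ l := by
  have hthree : ({l₁, l₂, mkLine hxy} : Set L).ncard ≤ 3 :=
    (Set.ncard_insert_le _ _).trans (Nat.succ_le_succ ((Set.ncard_insert_le _ _).trans (by simp)))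
  have hpos : 0 < ({l : L | x ∈ l} \ {l₁, l₂, mkLine hxy}).ncard := by
    have := Set.le_ncard_sdiff {l₁, l₂, mkLine hxy} {l : L | x ∈ l}
    rw [ncard_setOf_line_mem] at this
    omega
  obtain ⟨l, hxl, hl⟩ := Set.nonempty_of_ncard_ne_zero hpos.ne'
  simp only [Set.mem_ofPred_eq, Set.mem_insert_iff, Set.mem_singleton_iff, not_or] at hxl hl
  refine ⟨l, hxl, hl.1, hl.2.1, fun hyl => hl.2.2 ?_⟩
  exact line_eq_of_two_mem hxy hxl hyl (mkLine_ax hxy).1 (mkLine_ax hxy).2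

lemma eq_of_forall_mem_iff_of_forall_mem (hq : 3 ≤ ProjectivePlane.order P L) {x y : P}
    {l₁ l₂ : L} {B : Set L} (hB : ∀ l, x ∈ l → l ≠ l₁ → l ≠ l₂ → l ∈ B)
    (h : ∀ l ∈ B, x ∈ l ↔ y ∈ l) : x = y := by
  by_contra hxy
  obtain ⟨l, hxl, hl₁, hl₂, hyl⟩ := exists_line_mem_ne_ne_notMem hq hxy l₁ l₂
  exact hyl ((h l (hB l hxl hl₁ hl₂)).mp hxl)

end FiniteProjectivePlane

lemma SimpleGraph.dist_eq_two_of_adj_of_adj {V : Type*} {G : SimpleGraph V} {u v w : V}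
    (hne : u ≠ v) (hnadj : ¬G.Adj u v) (hu : G.Adj u w) (hv : G.Adj w v) : G.dist u v = 2 :=
  let walk := SimpleGraph.Walk.cons hu (.cons hv .nil)
  le_antisymm (SimpleGraph.dist_le walk)
    (SimpleGraph.Reachable.one_lt_dist_of_ne_of_not_adj ⟨walk⟩ hne hnadj)

section IncidenceGraph

variable {P L}

@[simp] lemma incGraph_adj_inl_inr {p : P} {l : L} :
    (incGraph P L).Adj (.inl p) (.inr l) ↔ p ∈ l := Iff.rfl

@[simp] lemma incGraph_adj_inr_inl {p : P} {l : L} :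
    (incGraph P L).Adj (.inr l) (.inl p) ↔ p ∈ l := Iff.rfl

@[simp] lemma not_incGraph_adj_inl_inl {p q : P} : ¬(incGraph P L).Adj (.inl p) (.inl q) := id

@[simp] lemma not_incGraph_adj_inr_inr {l m : L} : ¬(incGraph P L).Adj (.inr l) (.inr m) := id

def incGraphColoring : (incGraph P L).Coloring Bool :=
  SimpleGraph.Coloring.mk Sum.isLeft (by rintro (p | l) (q | m) h <;> simp_all)

lemma odd_dist_incGraph_inl_inr {p : P} {l : L}
    (h : (incGraph P L).Reachable (.inl p) (.inr l)) :
    Odd ((incGraph P L).dist (.inl p) (.inr l)) := by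
  obtain ⟨walk, hwalk⟩ := h.exists_walk_length_eq_dist
  rw [← hwalk, incGraphColoring.odd_length_iff_not_congr]
  simp [incGraphColoring, SimpleGraph.Coloring.mk]

open Classical in
lemma incGraph_dist_inl_inl [HasLines P L] (p q : P) :
    (incGraph P L).dist (.inl p) (.inl q) = if p = q then 0 else 2 := by
  split_ifs with hpq
  · simp [hpq]
  · exact SimpleGraph.dist_eq_two_of_adj_of_adj (by simpa) not_incGraph_adj_inl_inl
      (incGraph_adj_inl_inr.mpr (mkLine_ax (L := L) hpq).1)
      (incGraph_adj_inr_inl.mpr (mkLine_ax hpq).2)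

open Classical in
lemma incGraph_dist_inr_inr [HasPoints P L] (l m : L) :
    (incGraph P L).dist (.inr l) (.inr m) = if l = m then 0 else 2 := by
  split_ifs with hlm
  · simp [hlm]
  · exact SimpleGraph.dist_eq_two_of_adj_of_adj (by simpa) not_incGraph_adj_inr_inr
      (incGraph_adj_inr_inl.mpr (mkPoint_ax (P := P) hlm).1)
      (incGraph_adj_inl_inr.mpr (mkPoint_ax hlm).2)

open Classical in
lemma incGraph_dist_inl_inr [ProjectivePlane P L] [Finite P] [Finite L] (p : P) (l : L) :
    (incGraph P L).dist (.inl p) (.inr l) = if p ∈ l then 1 else 3 := by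
  split_ifs with hpl
  · exact SimpleGraph.dist_eq_one_iff_adj.mpr hpl
  obtain ⟨x, hxl⟩ : {x : P | x ∈ l}.Nonempty :=
    Set.nonempty_of_ncard_ne_zero (by rw [ncard_setOf_mem_line]; omega)
  have hpx : p ≠ x := fun h => hpl (h ▸ hxl)
  let walk : (incGraph P L).Walk (.inl p) (.inr l) :=
    .cons (incGraph_adj_inl_inr.mpr (mkLine_ax (L := L) hpx).1)
      (.cons (incGraph_adj_inr_inl.mpr (mkLine_ax hpx).2)
        (.cons (incGraph_adj_inl_inr.mpr hxl) .nil))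
  have hle : (incGraph P L).dist (.inl p) (.inr l) ≤ 3 := SimpleGraph.dist_le walk
  have hgt := SimpleGraph.Reachable.one_lt_dist_of_ne_of_not_adj ⟨walk⟩ (by simp) hpl
  obtain ⟨k, hk⟩ := odd_dist_incGraph_inl_inr ⟨walk⟩
  omega

open Classical in
lemma incGraph_dist_inr_inl [ProjectivePlane P L] [Finite P] [Finite L] (l : L) (p : P) :
    (incGraph P L).dist (.inr l) (.inl p) = if p ∈ l then 1 else 3 := by
  rw [SimpleGraph.dist_comm, incGraph_dist_inl_inr]

theorem isResolvingSet_of_forall_mem_iff [ProjectivePlane P L] [Finite P] [Finite L]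
    {A : Set P} {B : Set L} (hA : A.Nonempty)
    (hpoints : ∀ p q, p ∉ A → q ∉ A → (∀ l ∈ B, p ∈ l ↔ q ∈ l) → p = q)
    (hlines : ∀ l m, l ∉ B → m ∉ B → (∀ p ∈ A, p ∈ l ↔ p ∈ m) → l = m) :
    IsResolvingSet P L (Sum.inl '' A ∪ Sum.inr '' B) := by
  intro x y hd
  have hdA : ∀ a ∈ A, (incGraph P L).dist x (.inl a) = (incGraph P L).dist y (.inl a) :=
    fun a ha => hd _ (.inl ⟨a, ha, rfl⟩)
  have hdB : ∀ l ∈ B, (incGraph P L).dist x (.inr l) = (incGraph P L).dist y (.inr l) :=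
    fun l hl => hd _ (.inr ⟨l, hl, rfl⟩)
  obtain ⟨a, ha⟩ := hA
  rcases x with p | l <;> rcases y with q | m
  · by_cases hpq : p = q
    · rw [hpq]
    refine absurd (hpoints p q (fun hp => ?_) (fun hq => ?_) fun l hl => ?_) hpq
    · simpa [incGraph_dist_inl_inl, Ne.symm hpq] using hdA p hp
    · simpa [incGraph_dist_inl_inl, hpq] using hdA q hq
    · have := hdB l hl
      rw [incGraph_dist_inl_inr, incGraph_dist_inl_inr] at this
      split_ifs at this <;> simp_all
  · have := hdA a ha
    rw [incGraph_dist_inl_inl, incGraph_dist_inr_inl] at this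
    split_ifs at this <;> omega
  · have := hdA a ha
    rw [incGraph_dist_inl_inl, incGraph_dist_inr_inl] at this
    split_ifs at this <;> omega
  · by_cases hlm : l = m
    · rw [hlm]
    refine absurd (hlines l m (fun hl => ?_) (fun hm => ?_) fun p hp => ?_) hlm
    · simpa [incGraph_dist_inr_inr, Ne.symm hlm] using hdB l hl
    · simpa [incGraph_dist_inr_inr, hlm] using hdB m hm
    · have := hdA p hp
      rw [incGraph_dist_inr_inl, incGraph_dist_inr_inl] at this
      split_ifs at this <;> simp_all

end IncidenceGraph

instance {α : Type*} [Finite α] : Finite (Dual α) := ‹Finite α›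

-- `a, b, c` play the roles of `P, Q, R`; `pointSet` and `lineSet` below are `P_S` and `L_S`.
structure Triangle (P L : Type*) [Membership P L] where
  a : P
  b : P
  c : P
  ab : L
  ac : L
  bc : L
  a_ne_b : a ≠ b
  a_mem_ab : a ∈ ab
  b_mem_ab : b ∈ ab
  a_mem_ac : a ∈ ac
  c_mem_ac : c ∈ ac
  b_mem_bc : b ∈ bc
  c_mem_bc : c ∈ bc
  c_notMem_ab : c ∉ ab

namespace Triangle

variable {P L} (T : Triangle P L)

def pointSet : Set P := {x | (x ∈ T.ab ∨ x ∈ T.ac) ∧ x ≠ T.a ∧ x ≠ T.b ∧ x ≠ T.c}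

def lineSet : Set L := {l | (T.a ∈ l ∨ T.c ∈ l) ∧ l ≠ T.ab ∧ l ≠ T.ac ∧ l ≠ T.bc}

def resolvingSet : Set (P ⊕ L) := Sum.inl '' T.pointSet ∪ Sum.inr '' T.lineSet

lemma ab_ne_ac : T.ab ≠ T.ac := fun h => T.c_notMem_ab (h ▸ T.c_mem_ac)

lemma a_ne_c : T.a ≠ T.c := fun h => T.c_notMem_ab (h ▸ T.a_mem_ab)

lemma mem_lineSet_of_c_mem {l : L} (hc : T.c ∈ l) (hac : l ≠ T.ac) (hbc : l ≠ T.bc) :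
    l ∈ T.lineSet :=
  ⟨Or.inr hc, hc.ne_of_notMem' T.c_notMem_ab, hac, hbc⟩

lemma eq_or_notMem_of_notMem_pointSet {p : P} (hp : p ∉ T.pointSet) :
    p = T.a ∨ p = T.b ∨ p = T.c ∨ p ∉ T.ab ∧ p ∉ T.ac := by
  simp only [pointSet, Set.mem_ofPred_eq, not_and_or, not_not] at hp
  tauto

section Nondegenerate

variable [Nondegenerate P L]

lemma b_notMem_ac : T.b ∉ T.ac := fun h =>
  T.c_notMem_ab (line_eq_of_two_mem T.a_ne_b T.a_mem_ac h T.a_mem_ab T.b_mem_ab ▸ T.c_mem_ac)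

lemma a_notMem_bc : T.a ∉ T.bc := fun h =>
  T.c_notMem_ab (line_eq_of_two_mem T.a_ne_b h T.b_mem_bc T.a_mem_ab T.b_mem_ab ▸ T.c_mem_bc)

lemma ac_ne_bc : T.ac ≠ T.bc := fun h => T.b_notMem_ac (h ▸ T.b_mem_bc)

lemma mem_lineSet_of_a_mem {l : L} (ha : T.a ∈ l) (hab : l ≠ T.ab) (hac : l ≠ T.ac) :
    l ∈ T.lineSet :=
  ⟨Or.inl ha, hab, hac, ha.ne_of_notMem' T.a_notMem_bc⟩

lemma mem_lineSet_of_a_mem_of_mem {x : P} {l : L} (ha : T.a ∈ l) (hx : x ∈ l)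
    (hab : x ∉ T.ab) (hac : x ∉ T.ac) : l ∈ T.lineSet :=
  T.mem_lineSet_of_a_mem ha (hx.ne_of_notMem' hab) (hx.ne_of_notMem' hac)

def dual : Triangle (Dual L) (Dual P) where
  a := T.ac
  b := T.bc
  c := T.ab
  ab := T.c
  ac := T.a
  bc := T.b
  a_ne_b := T.ac_ne_bc
  a_mem_ab := T.c_mem_ac
  b_mem_ab := T.c_mem_bc
  a_mem_ac := T.a_mem_ac
  c_mem_ac := T.a_mem_ab
  b_mem_bc := T.b_mem_bc
  c_mem_bc := T.b_mem_ab
  c_notMem_ab := T.c_notMem_ab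

lemma dual_pointSet : T.dual.pointSet = T.lineSet :=
  Set.ext fun _ => ⟨fun ⟨h, hac, hbc, hab⟩ => ⟨h.symm, hab, hac, hbc⟩,
    fun ⟨h, hab, hac, hbc⟩ => ⟨h.symm, hac, hbc, hab⟩⟩

lemma dual_lineSet : T.dual.lineSet = T.pointSet :=
  Set.ext fun _ => ⟨fun ⟨h, hc, ha, hb⟩ => ⟨h.symm, ha, hb, hc⟩,
    fun ⟨h, ha, hb, hc⟩ => ⟨h.symm, hc, ha, hb⟩⟩

end Nondegenerate

section HasLines

variable [HasLines P L] {p q : P}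

lemma mem_ab_of_forall_mem_iff_b (h : ∀ l ∈ T.lineSet, T.b ∈ l ↔ q ∈ l)
    (hac : q ∉ T.ac) : q ∈ T.ab := by
  by_contra hab
  have haq : T.a ≠ q := T.a_mem_ab.ne_of_notMem hab
  obtain ⟨ha, hq⟩ := mkLine_ax (L := L) haq
  have hb := (h _ (T.mem_lineSet_of_a_mem_of_mem ha hq hab hac)).mpr hq
  exact hab (line_eq_of_two_mem T.a_ne_b ha hb T.a_mem_ab T.b_mem_ab ▸ hq)

lemma eq_of_forall_mem_iff_of_notMem_sides (h : ∀ l ∈ T.lineSet, p ∈ l ↔ q ∈ l)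
    (hab : p ∉ T.ab) (hac : p ∉ T.ac) (hbc : p ∉ T.bc) : p = q := by
  obtain ⟨ha, hpa⟩ := mkLine_ax (L := L) (T.a_mem_ab.ne_of_notMem hab)
  obtain ⟨hc, hpc⟩ := mkLine_ax (L := L) (T.c_mem_ac.ne_of_notMem hac)
  have hqa := (h _ (T.mem_lineSet_of_a_mem_of_mem ha hpa hab hac)).mp hpa
  have hqc :=
    (h _ (T.mem_lineSet_of_c_mem hc (hpc.ne_of_notMem' hac) (hpc.ne_of_notMem' hbc))).mp hpc
  have hne : mkLine (T.a_mem_ab.ne_of_notMem hab) ≠ (mkLine (T.c_mem_ac.ne_of_notMem hac) : L) :=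
    fun e => hac (line_eq_of_two_mem T.a_ne_c ha (e ▸ hc) T.a_mem_ac T.c_mem_ac ▸ hpa)
  exact point_eq_of_two_mem hne hpa hpc hqa hqc

lemma eq_of_forall_mem_iff_of_mem_bc (h : ∀ l ∈ T.lineSet, p ∈ l ↔ q ∈ l)
    (hab : p ∉ T.ab) (hac : p ∉ T.ac) (hpbc : p ∈ T.bc) (hqbc : q ∈ T.bc) : p = q := by
  obtain ⟨ha, hpa⟩ := mkLine_ax (L := L) (T.a_mem_ab.ne_of_notMem hab)
  have hqa := (h _ (T.mem_lineSet_of_a_mem_of_mem ha hpa hab hac)).mp hpa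
  exact point_eq_of_two_mem (ha.ne_of_notMem' T.a_notMem_bc) hpa hpbc hqa hqbc

end HasLines

section ProjectivePlane

variable [ProjectivePlane P L] [Finite P] [Finite L]

lemma a_eq_of_forall_mem_iff (hq : 3 ≤ ProjectivePlane.order P L) {q : P}
    (h : ∀ l ∈ T.lineSet, T.a ∈ l ↔ q ∈ l) : T.a = q :=
  eq_of_forall_mem_iff_of_forall_mem hq (fun _ => T.mem_lineSet_of_a_mem) h

lemma c_eq_of_forall_mem_iff (hq : 3 ≤ ProjectivePlane.order P L) {q : P}
    (h : ∀ l ∈ T.lineSet, T.c ∈ l ↔ q ∈ l) : T.c = q :=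
  eq_of_forall_mem_iff_of_forall_mem hq (fun _ => T.mem_lineSet_of_c_mem) h

theorem eq_of_forall_mem_iff (hq : 3 ≤ ProjectivePlane.order P L) {p q : P}
    (hp : p ∉ T.pointSet) (hq' : q ∉ T.pointSet)
    (h : ∀ l ∈ T.lineSet, p ∈ l ↔ q ∈ l) : p = q := by
  have h' : ∀ l ∈ T.lineSet, q ∈ l ↔ p ∈ l := fun l hl => (h l hl).symm
  rcases T.eq_or_notMem_of_notMem_pointSet hp with rfl | rfl | rfl | ⟨hpab, hpac⟩
  · exact T.a_eq_of_forall_mem_iff hq h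
  · rcases T.eq_or_notMem_of_notMem_pointSet hq' with rfl | rfl | rfl | ⟨hqab, hqac⟩
    · exact (T.a_eq_of_forall_mem_iff hq h').symm
    · rfl
    · exact (T.c_eq_of_forall_mem_iff hq h').symm
    · exact absurd (T.mem_ab_of_forall_mem_iff_b h hqac) hqab
  · exact T.c_eq_of_forall_mem_iff hq h
  · rcases T.eq_or_notMem_of_notMem_pointSet hq' with rfl | rfl | rfl | ⟨hqab, hqac⟩
    · exact (T.a_eq_of_forall_mem_iff hq h').symm
    · exact absurd (T.mem_ab_of_forall_mem_iff_b h' hpac) hpab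
    · exact (T.c_eq_of_forall_mem_iff hq h').symm
    · by_cases hpbc : p ∈ T.bc
      · by_cases hqbc : q ∈ T.bc
        · exact T.eq_of_forall_mem_iff_of_mem_bc h hpab hpac hpbc hqbc
        · exact (T.eq_of_forall_mem_iff_of_notMem_sides h' hqab hqac hqbc).symm
      · exact T.eq_of_forall_mem_iff_of_notMem_sides h hpab hpac hpbc

theorem line_eq_of_forall_mem_iff (hq : 3 ≤ ProjectivePlane.order P L) {l m : L}
    (hl : l ∉ T.lineSet) (hm : m ∉ T.lineSet) (h : ∀ p ∈ T.pointSet, p ∈ l ↔ p ∈ m) :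
    l = m :=
  T.dual.eq_of_forall_mem_iff (ProjectivePlane.Dual.order P L ▸ hq) (T.dual_pointSet ▸ hl)
    (T.dual_pointSet ▸ hm) fun p hp => h p (T.dual_lineSet ▸ hp)

lemma ncard_pointSet : T.pointSet.ncard = 2 * ProjectivePlane.order P L - 2 := by
  have hsplit :
      T.pointSet = ({p | p ∈ T.ab} \ {T.a, T.b}) ∪ ({p | p ∈ T.ac} \ {T.a, T.c}) := by
    ext p
    simp only [pointSet, Set.mem_ofPred_eq, Set.mem_union, Set.mem_sdiff, Set.mem_insert_iff,
      Set.mem_singleton_iff]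
    have := T.b_notMem_ac
    have := T.c_notMem_ab
    grind
  have hdisj : Disjoint ({p | p ∈ T.ab} \ {T.a, T.b}) ({p | p ∈ T.ac} \ {T.a, T.c}) :=
    Set.disjoint_left.mpr fun p hp hp' =>
      hp.2 (.inl (point_eq_of_two_mem T.ab_ne_ac hp.1 hp'.1 T.a_mem_ab T.a_mem_ac))
  rw [hsplit, Set.ncard_union_eq hdisj,
    ncard_setOf_mem_line_diff_pair T.a_ne_b T.a_mem_ab T.b_mem_ab,
    ncard_setOf_mem_line_diff_pair T.a_ne_c T.a_mem_ac T.c_mem_ac]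
  omega

lemma ncard_lineSet : T.lineSet.ncard = 2 * ProjectivePlane.order P L - 2 :=
  ProjectivePlane.Dual.order P L ▸ T.dual_pointSet ▸ T.dual.ncard_pointSet

theorem isResolvingSet_resolvingSet (hq : 3 ≤ ProjectivePlane.order P L) :
    IsResolvingSet P L T.resolvingSet :=
  isResolvingSet_of_forall_mem_iff
    (Set.nonempty_of_ncard_ne_zero (by rw [T.ncard_pointSet]; omega))
    (fun _ _ => T.eq_of_forall_mem_iff hq) (fun _ _ => T.line_eq_of_forall_mem_iff hq)

lemma ncard_resolvingSet : T.resolvingSet.ncard = 4 * ProjectivePlane.order P L - 4 := by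
  have hdisj : Disjoint (Sum.inl '' T.pointSet) (Sum.inr '' T.lineSet) :=
    Set.isCompl_range_inl_range_inr.disjoint.mono (Set.image_subset_range _ _)
      (Set.image_subset_range _ _)
  rw [resolvingSet, Set.ncard_union_eq hdisj, Set.ncard_image_of_injective _ Sum.inl_injective,
    Set.ncard_image_of_injective _ Sum.inr_injective, ncard_pointSet, ncard_lineSet]
  omega

end ProjectivePlane

end Triangle

open Configuration.HasLines in
/-- the explicit construction of a resolving set of size 4q - 4 from three
points in general position. -/
theorem construction_resolving_set
    {P L : Type*} [Membership P L] [ProjectivePlane P L] [Fintype P] [Fintype L]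
    (hq : 3 ≤ ProjectivePlane.order P L)
    (Pp Qp Rp : P) (hPQ : Pp ≠ Qp) (hPR : Pp ≠ Rp) (hRQ : Rp ≠ Qp)
    (hgen : Rp ∉ (mkLine hPQ : L)) :
    let ePQ : L := mkLine hPQ
    let ePR : L := mkLine hPR
    let eRQ : L := mkLine hRQ
    let S : Set (P ⊕ L) :=
      (Sum.inl '' {x : P | (x ∈ ePQ ∨ x ∈ ePR) ∧ x ≠ Pp ∧ x ≠ Qp ∧ x ≠ Rp}) ∪
      (Sum.inr '' {l : L | (Pp ∈ l ∨ Rp ∈ l) ∧ l ≠ ePQ ∧ l ≠ ePR ∧ l ≠ eRQ})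
    IsResolvingSet P L S ∧ S.ncard = 4 * ProjectivePlane.order P L - 4 := by
  intro ePQ ePR eRQ S
  let T : Triangle P L :=
    { a := Pp, b := Qp, c := Rp, ab := ePQ, ac := ePR, bc := eRQ
      a_ne_b := hPQ
      a_mem_ab := (mkLine_ax hPQ).1, b_mem_ab := (mkLine_ax hPQ).2
      a_mem_ac := (mkLine_ax hPR).1, c_mem_ac := (mkLine_ax hPR).2
      b_mem_bc := (mkLine_ax hRQ).2, c_mem_bc := (mkLine_ax hRQ).1
      c_notMem_ab := hgen }
  exact ⟨T.isResolvingSet_resolvingSet hq, T.ncard_resolvingSet⟩
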